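/- In ℤ[x_1,…,x_N] for any number of variables N, the identity h_2·h_1^3 − h_5 + h_4·h_1 + 2·h_3·h_2 − h_3·h_1^2 − 2·h_2^2·h_1 = m_{(2,1,1,1)} + 4·m_{(1,1,1,1,1)} holds. (This is the paper's Row 6 result for S_5: χ^{(2,1,1,1)} = φ^{(2,1,1,1)} − φ^{(5)} + φ^{(4,1)} + 2φ^{(3,2)} − φ^{(3,1,1)} − 2φ^{(2,2,1)} together with the Kostka column for (2,1,1,1).) -/

import Mathlib

/-!
Compare coefficients. The coefficient of `x^d` in `h_{a₁} ⋯ h_{a_k}` is the number of ways to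
split `d` into exponent vectors of degrees `a₁, …, a_k`, and the coefficient of `x^d` in `m_λ`
is `1` or `0` according as the nonzero entries of `d` are the parts of `λ` or not. Neither
depends on the variables outside the support of `d`: killing them (`killCompl`) maps `h_n` to
`h_n` and `m_λ` to `m_λ`. So it suffices to compare coefficients at exponent vectors with full
support on `Fin k`. Those of degree `5` are the sixteen compositions of `5`, checked by
evaluation; in any other degree all coefficients vanish.
-/

open MvPolynomial

/-- The partition `(4,1)` of `5`. -/
def q41 : Nat.Partition 5 := Nat.Partition.ofSums 5 {4, 1} (by decide)

/-- The partition `(3,2)` of `5`. -/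
def q32 : Nat.Partition 5 := Nat.Partition.ofSums 5 {3, 2} (by decide)

/-- The partition `(3,1,1)` of `5`. -/
def q311 : Nat.Partition 5 := Nat.Partition.ofSums 5 {3, 1, 1} (by decide)

/-- The partition `(2,2,1)` of `5`. -/
def q221 : Nat.Partition 5 := Nat.Partition.ofSums 5 {2, 2, 1} (by decide)

/-- The partition `(2,1,1,1)` of `5`. -/
def q2111 : Nat.Partition 5 := Nat.Partition.ofSums 5 {2, 1, 1, 1} (by decide)

/-- The partition `(1,1,1,1,1)` of `5`. -/
def q11111 : Nat.Partition 5 := Nat.Partition.ofSums 5 {1, 1, 1, 1, 1} (by decide)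

open Finset

namespace Finsupp

variable {σ : Type*}

def shape (d : σ →₀ ℕ) : Multiset ℕ := d.support.val.map d

theorem sum_shape (d : σ →₀ ℕ) : d.shape.sum = d.degree :=
  Finset.sum_map_val _ _

theorem shape_mapDomain {τ : Type*} {f : σ → τ} (hf : Function.Injective f) (d : σ →₀ ℕ) :
    (mapDomain f d).shape = d.shape := by
  classical
  rw [shape, shape, mapDomain_support_of_injective hf, image_val_of_injOn hf.injOn,
    Multiset.map_map]
  exact Multiset.map_congr rfl fun a _ => mapDomain_apply hf d a

theorem card_support_le_degree (d : σ →₀ ℕ) : #d.support ≤ d.degree := by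
  rw [card_eq_sum_ones, degree_apply]
  exact Finset.sum_le_sum fun i hi => Nat.one_le_iff_ne_zero.mpr (mem_support_iff.mp hi)

theorem exists_eq_mapDomain_of_support_eq_univ (d : σ →₀ ℕ) :
    ∃ (k : ℕ) (f : Fin k → σ), Function.Injective f ∧
      ∃ d' : Fin k →₀ ℕ, d'.support = univ ∧ d = mapDomain f d' := by
  let f : Fin #d.support → σ := Subtype.val ∘ d.support.equivFin.symm
  have hf : Function.Injective f := Subtype.val_injective.comp d.support.equivFin.symm.injective
  refine ⟨_, f, hf, comapDomain f d hf.injOn, ?_, ?_⟩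
  · ext i
    simp [f]
  · refine (mapDomain_comapDomain f hf d fun i hi => ?_).symm
    exact ⟨d.support.equivFin ⟨i, hi⟩, by simp [f]⟩

variable [DecidableEq σ]

theorem exists_eq_toFinsupp_univ_add [Fintype σ] {n : ℕ} (d : σ →₀ ℕ) (hd : d.support = univ)
    (hn : d.degree = n) :
    ∃ r : Sym σ (n - Fintype.card σ), d = Multiset.toFinsupp (univ.val + (r : Multiset σ)) := by
  have hle : (univ.val : Multiset σ) ≤ toMultiset d :=
    (Multiset.le_iff_subset univ.nodup).mpr fun i _ => by simp [hd]
  refine ⟨⟨toMultiset d - univ.val, ?_⟩, ?_⟩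
  · rw [Multiset.card_sub hle, card_toMultiset, ← hn]
    rfl
  · simp [add_tsub_cancel_of_le hle]

noncomputable def decompCount : List ℕ → (σ →₀ ℕ) → ℕ
  | [], d => if d = 0 then 1 else 0
  | a :: L, d => ∑ p ∈ antidiagonal d with p.1.degree = a, decompCount L p.2

theorem decompCount_eq_zero_of_degree_ne (L : List ℕ) {d : σ →₀ ℕ} (h : d.degree ≠ L.sum) :
    decompCount L d = 0 := by
  induction L generalizing d with
  | nil => simp_all [decompCount, degree_eq_zero_iff]
  | cons a L ih =>
    refine Finset.sum_eq_zero fun p hp => ih fun hp2 => h ?_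
    rw [Finset.mem_filter, HasAntidiagonal.mem_antidiagonal] at hp
    rw [← hp.1, map_add, hp.2, hp2, List.sum_cons]

end Finsupp

theorem Nat.Partition.parts_ofSym {σ : Type*} [DecidableEq σ] {n : ℕ} (s : Sym σ n) :
    (ofSym s).parts = (Multiset.toFinsupp s.1).shape :=
  rfl

namespace MvPolynomial

variable {σ R : Type*}

section CommSemiring

variable [CommSemiring R]

theorem prod_map_X_eq_monomial [DecidableEq σ] (m : Multiset σ) :
    (m.map (X : σ → MvPolynomial σ R)).prod = monomial (Multiset.toFinsupp m) 1 := by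
  induction m using Multiset.induction with
  | empty => simp
  | cons a s ih =>
    rw [Multiset.map_cons, Multiset.prod_cons, ih, X, monomial_mul, one_mul,
      ← Multiset.singleton_add, Multiset.toFinsupp_add, Multiset.toFinsupp_singleton]

open scoped Classical in
theorem coeff_sum_monomial_of_injective {ι : Type*} [Fintype ι] {e : ι → σ →₀ ℕ}
    (he : Function.Injective e) (d : σ →₀ ℕ) :
    coeff d (∑ i, monomial (e i) (1 : R)) = if d ∈ Set.range e then 1 else 0 := by
  simp only [coeff_sum, coeff_monomial]
  split_ifs with h
  · obtain ⟨i, rfl⟩ := h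
    rw [Fintype.sum_eq_single i fun j hj => if_neg (he.ne hj), if_pos rfl]
  · exact Fintype.sum_eq_zero _ fun i => if_neg fun hi => h ⟨i, hi⟩

variable [Fintype σ] [DecidableEq σ]

theorem coeff_hsymm (n : ℕ) (d : σ →₀ ℕ) :
    coeff d (hsymm σ R n) = if d.degree = n then 1 else 0 := by
  have he : Function.Injective fun s : Sym σ n => Multiset.toFinsupp s.1 :=
    fun s t h => Subtype.ext (Multiset.toFinsupp.injective h)
  have hrange : d ∈ Set.range (fun s : Sym σ n => Multiset.toFinsupp s.1) ↔
      d.degree = n := by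
    constructor
    · rintro ⟨s, rfl⟩
      exact (Multiset.toFinsupp_sum_eq _).trans s.2
    · intro hd
      refine ⟨Sym.mk (Finsupp.toMultiset d) ?_, by simp⟩
      rw [Finsupp.card_toMultiset, ← hd]
      rfl
  simp only [hsymm, prod_map_X_eq_monomial, coeff_sum_monomial_of_injective he, hrange]

theorem coeff_msymm {n : ℕ} (μ : n.Partition) (d : σ →₀ ℕ) :
    coeff d (msymm σ R μ) = if d.shape = μ.parts then 1 else 0 := by
  have he : Function.Injective
      fun s : {a : Sym σ n // .ofSym a = μ} => Multiset.toFinsupp s.1.1 :=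
    fun s t h => Subtype.ext (Subtype.ext (Multiset.toFinsupp.injective h))
  have hrange : d ∈ Set.range
      (fun s : {a : Sym σ n // .ofSym a = μ} => Multiset.toFinsupp s.1.1) ↔
      d.shape = μ.parts := by
    constructor
    · rintro ⟨s, rfl⟩
      rw [← Nat.Partition.parts_ofSym, s.2]
    · intro hd
      have hcard : Multiset.card (Finsupp.toMultiset d) = n := by
        rw [Finsupp.card_toMultiset, ← μ.parts_sum, ← hd, Finsupp.sum_shape]
        rfl
      refine ⟨⟨Sym.mk (Finsupp.toMultiset d) hcard, ?_⟩, by simp⟩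
      ext1
      rw [Nat.Partition.parts_ofSym, Finsupp.toMultiset_toFinsupp, hd]
  simp only [msymm, prod_map_X_eq_monomial, coeff_sum_monomial_of_injective he, hrange]

theorem coeff_prod_hsymm (L : List ℕ) (d : σ →₀ ℕ) :
    coeff d (L.map (hsymm σ R)).prod = Finsupp.decompCount L d := by
  induction L generalizing d with
  | nil => simp [Finsupp.decompCount, coeff_one, eq_comm]
  | cons a L ih =>
    rw [List.map_cons, List.prod_cons, coeff_mul, Finsupp.decompCount, Nat.cast_sum,
      Finset.sum_filter]
    refine Finset.sum_congr rfl fun p _ => ?_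
    rw [coeff_hsymm, ih]
    split_ifs <;> simp

variable {τ : Type*} [Fintype τ] [DecidableEq τ] {f : σ → τ} (hf : Function.Injective f)

theorem killCompl_hsymm (n : ℕ) : killCompl hf (hsymm τ R n) = hsymm σ R n := by
  ext d
  rw [coeff_killCompl, coeff_hsymm, coeff_hsymm, Finsupp.degree_mapDomain]

theorem killCompl_msymm {n : ℕ} (μ : n.Partition) :
    killCompl hf (msymm τ R μ) = msymm σ R μ := by
  ext d
  rw [coeff_killCompl, coeff_msymm, coeff_msymm, Finsupp.shape_mapDomain hf]

end CommSemiring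

variable (σ R) [Fintype σ] [DecidableEq σ] [CommRing R]

/-- The Jacobi–Trudi determinant `det (h_{λᵢ - i + j})` for `λ = (2,1,1,1)`. -/
noncomputable def jacobiTrudi2111 : MvPolynomial σ R :=
  hsymm σ R 2 * hsymm σ R 1 ^ 3 - hsymm σ R 5 + hsymm σ R 4 * hsymm σ R 1 +
    2 * (hsymm σ R 3 * hsymm σ R 2) - hsymm σ R 3 * hsymm σ R 1 ^ 2 -
    2 * (hsymm σ R 2 ^ 2 * hsymm σ R 1)

variable {σ R}

theorem killCompl_jacobiTrudi2111 {τ : Type*} [Fintype τ] [DecidableEq τ] {f : σ → τ}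
    (hf : Function.Injective f) : killCompl hf (jacobiTrudi2111 τ R) = jacobiTrudi2111 σ R := by
  simp only [jacobiTrudi2111, map_sub, map_add, map_mul, map_pow, map_ofNat, killCompl_hsymm]

open Finsupp in
theorem coeff_jacobiTrudi2111 (d : σ →₀ ℕ) :
    coeff d (jacobiTrudi2111 σ ℤ) =
      (decompCount [2, 1, 1, 1] d : ℤ) - decompCount [5] d + decompCount [4, 1] d +
        2 * decompCount [3, 2] d - decompCount [3, 1, 1] d - 2 * decompCount [2, 2, 1] d := by
  have h : jacobiTrudi2111 σ ℤ =
      ([2, 1, 1, 1].map (hsymm σ ℤ)).prod - ([5].map (hsymm σ ℤ)).prod +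
        ([4, 1].map (hsymm σ ℤ)).prod + C 2 * ([3, 2].map (hsymm σ ℤ)).prod -
        ([3, 1, 1].map (hsymm σ ℤ)).prod - C 2 * ([2, 2, 1].map (hsymm σ ℤ)).prod := by
    simp only [jacobiTrudi2111, List.map_cons, List.map_nil, List.prod_cons, List.prod_nil,
      map_ofNat]
    ring
  rw [h]
  simp only [coeff_sub, coeff_add, coeff_C_mul, coeff_prod_hsymm]

end MvPolynomial

open Finsupp

theorem decompCount_identity_toFinsupp_univ_add :
    ∀ k ≤ 5, ∀ r : Sym (Fin k) (5 - Fintype.card (Fin k)),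
      let d := Multiset.toFinsupp (univ.val + (r : Multiset (Fin k)))
      (decompCount [2, 1, 1, 1] d : ℤ) - decompCount [5] d + decompCount [4, 1] d +
          2 * decompCount [3, 2] d - decompCount [3, 1, 1] d - 2 * decompCount [2, 2, 1] d =
        (if d.shape = q2111.parts then 1 else 0) + 4 * if d.shape = q11111.parts then 1 else 0 := by
  decide +kernel

theorem coeff_jacobiTrudi2111_of_support_eq_univ {k : ℕ} (d : Fin k →₀ ℕ)
    (hd : d.support = univ) :
    coeff d (jacobiTrudi2111 (Fin k) ℤ) =
      coeff d (msymm (Fin k) ℤ q2111 + 4 * msymm (Fin k) ℤ q11111) := by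
  have h4 : (4 : MvPolynomial (Fin k) ℤ) = C 4 := (map_ofNat C 4).symm
  rw [coeff_jacobiTrudi2111, h4, coeff_add, coeff_C_mul, coeff_msymm, coeff_msymm]
  by_cases h5 : d.degree = 5
  · have hk : k ≤ 5 := by simpa [hd, h5] using d.card_support_le_degree
    obtain ⟨r, rfl⟩ := d.exists_eq_toFinsupp_univ_add hd h5
    exact decompCount_identity_toFinsupp_univ_add k hk r
  · have hcount (L : List ℕ) (hL : L.sum = 5) : decompCount L d = 0 :=
      decompCount_eq_zero_of_degree_ne L (hL ▸ h5)
    have hshape (μ : Nat.Partition 5) : d.shape ≠ μ.parts := fun h =>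
      h5 (by rw [← sum_shape, h, μ.parts_sum])
    simp [hcount, hshape]

theorem stmt_16 (N : ℕ) :
    hsymm (Fin N) ℤ 2 * hsymm (Fin N) ℤ 1 ^ 3 - hsymm (Fin N) ℤ 5 +
        hsymm (Fin N) ℤ 4 * hsymm (Fin N) ℤ 1 + 2 * (hsymm (Fin N) ℤ 3 * hsymm (Fin N) ℤ 2) -
        hsymm (Fin N) ℤ 3 * hsymm (Fin N) ℤ 1 ^ 2 -
        2 * (hsymm (Fin N) ℤ 2 ^ 2 * hsymm (Fin N) ℤ 1) =
      msymm (Fin N) ℤ q2111 + 4 * msymm (Fin N) ℤ q11111 := by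
  change jacobiTrudi2111 (Fin N) ℤ = _
  ext d
  obtain ⟨k, f, hf, d', hd', rfl⟩ := exists_eq_mapDomain_of_support_eq_univ d
  rw [← coeff_killCompl hf, ← coeff_killCompl hf, killCompl_jacobiTrudi2111, map_add, map_mul,
    map_ofNat, killCompl_msymm, killCompl_msymm]
  exact coeff_jacobiTrudi2111_of_support_eq_univ d' hd'
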